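/- arXiv:2410.22337 — 2 statements merged into one kernel-verified Lean document; each statement's English description precedes it below -/
import Mathlib

section
/- Let n = 2^k + m, where k, m ∈ ℕ and m ≤ 2^k. Then n·K_n = 2^k·K_{2^k} + m·D_{2^k} + r_k·m·K_m (as functions on G, with the convention 0·K_0 = 0). -/
open MeasureTheory
open scoped ENNReal

noncomputable section

/-- The dyadic group: countable product of `ZMod 2`. -/
abbrev G : Type := ℕ → ZMod 2

instance : TopologicalSpace (ZMod 2) := ⊥
instance : DiscreteTopology (ZMod 2) := ⟨rfl⟩
instance : IsTopologicalAddGroup (ZMod 2) :=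
  { continuous_add := continuous_of_discreteTopology
    continuous_neg := continuous_of_discreteTopology }

instance : MeasurableSpace G := borel G
instance : BorelSpace G := ⟨rfl⟩

/-- The normalized Haar measure on the dyadic group. -/
def haarG : Measure G :=
  Measure.addHaarMeasure ⟨⟨Set.univ, isCompact_univ⟩, by simp⟩

/-- Rademacher functions. -/
def rade (k : ℕ) (x : G) : ℝ := (-1 : ℝ) ^ (x k).val

/-- Walsh–Paley functions. -/
def walsh (n : ℕ) (x : G) : ℝ :=
  ∏ k ∈ Finset.range (n + 1), if n.testBit k then rade k x else 1

/-- Dirichlet kernels. -/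
def Dker (n : ℕ) (x : G) : ℝ := ∑ k ∈ Finset.range n, walsh k x

/-- Fejér kernels. -/
def Fker (n : ℕ) (x : G) : ℝ := (1 / n : ℝ) * ∑ k ∈ Finset.Icc 1 n, Dker k x

/-- Walsh–Fourier coefficients. -/
def fourierCoef (f : G → ℝ) (j : ℕ) : ℝ := ∫ x, f x * walsh j x ∂haarG

/-- Partial sums of the Walsh–Fourier series. -/
def partialSum (f : G → ℝ) (k : ℕ) (x : G) : ℝ :=
  ∑ j ∈ Finset.range k, fourierCoef f j * walsh j x

/-- Fejér means. -/
def fejerMean (n : ℕ) (f : G → ℝ) (x : G) : ℝ :=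
  (1 / n : ℝ) * ∑ k ∈ Finset.Icc 1 n, partialSum f k x

/-- Matrix transform means. -/
def sigmaT (t : ℕ → ℕ → ℝ) (n : ℕ) (f : G → ℝ) (x : G) : ℝ :=
  ∑ k ∈ Finset.Icc 1 n, t k n * partialSum f k x

/-- Matrix transform kernels. -/
def KT (t : ℕ → ℕ → ℝ) (n : ℕ) (x : G) : ℝ :=
  ∑ k ∈ Finset.Icc 1 n, t k n * Dker k x

/-- `Δ t_{k,n} = t_{k,n} - t_{k+1,n}` with convention `t_{n+1,n} = 0`. -/
def deltaT (t : ℕ → ℕ → ℝ) (k n : ℕ) : ℝ :=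
  t k n - (if k + 1 ≤ n then t (k + 1) n else 0)

/-- `|x| = ∑ x_i 2^{-(i+1)}` for `x ∈ G`. -/
def normG (x : G) : ℝ := ∑' i, ((x i).val : ℝ) / 2 ^ (i + 1)

/-- The `L_p` modulus of continuity. -/
def omegaP (p : ℝ≥0∞) (f : G → ℝ) (δ : ℝ) : ℝ≥0∞ :=
  ⨆ (t : G) (_ : normG t < δ), eLpNorm (fun x => f (x + t) - f x) p haarG

/-- Dyadic intervals `I_n` (around `0`). -/
def Iset (n : ℕ) : Set G := {y | ∀ i < n, y i = 0}

/-- `e_t ∈ G`: the `t`-th coordinate is `1`, the rest are `0`. -/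
def eG (t : ℕ) : G := fun i => if i = t then 1 else 0

/-- The order `|n|` of a positive integer: `2^{|n|} ≤ n < 2^{|n|+1}`. -/
def ord (n : ℕ) : ℕ := Nat.log 2 n


/-!
For `i < 2 ^ k` the binary digits of `2 ^ k + i` are those of `i` together with the digit `k`,
so `w (2 ^ k + i) = r k * w i`. Summing over `i < j` gives
`D (2 ^ k + j) = D (2 ^ k) + r k * D j` for `j ≤ 2 ^ k`, and summing once more over
`j = 1, …, m` gives the identity, because `n * K n = D 1 + ⋯ + D n`.
-/

open Finset

theorem Nat.testBit_two_pow_add_of_lt {k i : ℕ} (hi : i < 2 ^ k) (j : ℕ) :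
    (2 ^ k + i).testBit j = if j = k then true else i.testBit j := by
  rcases lt_trichotomy j k with hjk | rfl | hkj
  · simp [Nat.testBit_two_pow_add_gt hjk, hjk.ne]
  · simp [Nat.testBit_two_pow_add_eq, Nat.testBit_lt_two_pow hi]
  · have hlt : 2 ^ k + i < 2 ^ j :=
      calc 2 ^ k + i < 2 ^ (k + 1) := by rw [pow_succ]; omega
        _ ≤ 2 ^ j := Nat.pow_le_pow_right two_pos hkj
    simp [Nat.testBit_lt_two_pow hlt, Nat.testBit_lt_two_pow (hi.trans_le
      (Nat.pow_le_pow_right two_pos hkj.le)), hkj.ne']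

theorem walsh_eq_prod_range_of_lt {n M : ℕ} (hnM : n < M) (x : G) :
    walsh n x = ∏ j ∈ range M, if n.testBit j then rade j x else 1 := by
  refine prod_subset (range_subset_range.2 hnM) fun j _ hj => ?_
  have hn : n < 2 ^ j := (Nat.lt_two_pow_self).trans_le
    (Nat.pow_le_pow_right two_pos (by simp at hj; omega))
  simp [Nat.testBit_lt_two_pow hn]

theorem walsh_two_pow_add {k i : ℕ} (hi : i < 2 ^ k) (x : G) :
    walsh (2 ^ k + i) x = rade k x * walsh i x := by
  have hkM : k ∈ range (2 ^ k + i + 1) := mem_range.2 (by have := k.lt_two_pow_self; omega)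
  rw [walsh_eq_prod_range_of_lt (Nat.lt_succ_self _) x,
    walsh_eq_prod_range_of_lt (M := 2 ^ k + i + 1) (by omega) x,
    ← mul_prod_erase _ _ hkM, ← mul_prod_erase _ _ hkM,
    Nat.testBit_two_pow_add_of_lt hi, Nat.testBit_lt_two_pow hi]
  simp only [if_true, Bool.false_eq_true, if_false, one_mul]
  refine congrArg _ (prod_congr rfl fun j hj => ?_)
  rw [Nat.testBit_two_pow_add_of_lt hi, if_neg (mem_erase.1 hj).1]

theorem Dker_two_pow_add {k j : ℕ} (hj : j ≤ 2 ^ k) (x : G) :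
    Dker (2 ^ k + j) x = Dker (2 ^ k) x + rade k x * Dker j x := by
  rw [Dker, Dker, Dker, sum_range_add, mul_sum]
  exact congrArg _ (sum_congr rfl fun i hi => walsh_two_pow_add (by simp at hi; omega) x)

theorem natCast_mul_Fker (m : ℕ) (x : G) :
    (m : ℝ) * Fker m x = ∑ j ∈ range m, Dker (j + 1) x := by
  rcases m.eq_zero_or_pos with rfl | hm
  · simp [Fker]
  · rw [Fker, ← mul_assoc, mul_one_div_cancel (by positivity), one_mul,
      ← Ico_add_one_right_eq_Icc, sum_Ico_eq_sum_range, Nat.add_sub_cancel]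
    simp_rw [add_comm 1]

theorem statement5 (k m n : ℕ) (hm : m ≤ 2 ^ k) (hn : n = 2 ^ k + m) (x : G) :
    (n : ℝ) * Fker n x =
      (2 : ℝ) ^ k * Fker (2 ^ k) x + (m : ℝ) * Dker (2 ^ k) x
        + rade k x * m * Fker m x := by
  subst hn
  have hD : ∀ j ∈ range m,
      Dker (2 ^ k + j + 1) x = Dker (2 ^ k) x + rade k x * Dker (j + 1) x :=
    fun j hj => by rw [add_assoc]; exact Dker_two_pow_add (by simp at hj; omega) x
  rw [show (2 : ℝ) ^ k = ((2 ^ k : ℕ) : ℝ) by push_cast; rfl, mul_assoc, natCast_mul_Fker,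
    natCast_mul_Fker, natCast_mul_Fker, sum_range_add, sum_congr rfl hD, sum_add_distrib,
    ← mul_sum, sum_const, card_range, nsmul_eq_mul, add_assoc]
end
end

section
/- Let n ∈ ℕ and let {t_{k,2^n} : 1 ≤ k ≤ 2^n} be a finite sequence of real numbers. Then K_{2^n}^T = D_{2^n} · Σ_{k=1}^{2^n} t_{k,2^n} − w_{2^n−1} · t_{1,2^n} · (2^n − 1) · K_{2^n−1} + w_{2^n−1} · Σ_{k=1}^{2^n−2} Δt_{2^n−k−1,2^n} · k · K_k (as functions on G). -/
open MeasureTheory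
open scoped ENNReal

noncomputable section

/-! The binary digits of `2 ^ n - 1 - m` are those of `m` flipped, so
`w (2 ^ n - 1 - m) = w (2 ^ n - 1) * w m`, and summing gives the reflection formula
`D (2 ^ n - j) = D (2 ^ n) - w (2 ^ n - 1) * D j`. Reindexing `k ↦ 2 ^ n - k` in
`K^T = ∑ t_k D_k` and substituting it splits off `D (2 ^ n) * ∑ t_k`; the remaining
`∑ t_(2 ^ n - j) D_j` is summed by parts, its partial sums `∑_{i ≤ k} D_i` being `k K_k`. -/

open Finset

namespace Finset

theorem sum_Icc_one_eq_sum_range_sub {M : Type*} [AddCommMonoid M] (f : ℕ → M) (N : ℕ) :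
    ∑ k ∈ Icc 1 N, f k = ∑ j ∈ range N, f (N - j) := by
  rw [range_eq_Ico, sum_Ico_reflect f 0 (Nat.le_succ N), ← Ico_add_one_right_eq_Icc]
  simp

theorem sum_range_eq_sum_Icc_one_of_map_zero {M : Type*} [AddCommMonoid M] {f : ℕ → M}
    (hf : f 0 = 0) (m : ℕ) : ∑ j ∈ range m, f j = ∑ j ∈ Icc 1 (m - 1), f j := by
  rcases m with _ | m
  · simp
  · rw [range_eq_Ico, sum_eq_sum_Ico_succ_bot m.succ_pos, hf, zero_add, zero_add,
      Nat.add_sub_cancel, ← Ico_add_one_right_eq_Icc]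
    rfl

end Finset

theorem rade_mul_self (k : ℕ) (x : G) : rade k x * rade k x = 1 := by
  rw [rade, ← pow_add]
  exact Even.neg_one_pow ⟨(x k).val, rfl⟩

theorem prod_range_testBit_rade_eq {j A B : ℕ} (x : G) (hA : j < 2 ^ A) (hAB : A ≤ B) :
    ∏ k ∈ range A, (if j.testBit k then rade k x else 1)
      = ∏ k ∈ range B, (if j.testBit k then rade k x else 1) := by
  refine prod_subset (range_subset_range.2 hAB) fun k _ hk => ?_
  have hjk : j < 2 ^ k := hA.trans_le (Nat.pow_le_pow_right two_pos (by simpa using hk))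
  simp [Nat.testBit_eq_false_of_lt hjk]

theorem walsh_eq_prod_range {j M : ℕ} (h : j < 2 ^ M) (x : G) :
    walsh j x = ∏ k ∈ range M, (if j.testBit k then rade k x else 1) := by
  have hj : j < 2 ^ (j + 1) := (Nat.lt_two_pow_self).trans (Nat.pow_lt_pow_succ one_lt_two)
  rw [walsh, prod_range_testBit_rade_eq x hj (le_max_left _ M),
    prod_range_testBit_rade_eq x h (le_max_right _ M)]

theorem walsh_two_pow_sub_one_sub {n m : ℕ} (hm : m < 2 ^ n) (x : G) :
    walsh (2 ^ n - 1 - m) x = walsh (2 ^ n - 1) x * walsh m x := by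
  rw [walsh_eq_prod_range (M := n) (by omega) x, walsh_eq_prod_range (M := n) (by omega) x,
    walsh_eq_prod_range hm x, ← prod_mul_distrib]
  refine prod_congr rfl fun k hk => ?_
  have hkn : k < n := mem_range.1 hk
  rw [Nat.sub_sub, Nat.add_comm, Nat.testBit_two_pow_sub_succ hm, Nat.testBit_two_pow_sub_one]
  cases m.testBit k <;> simp [hkn, rade_mul_self]

theorem Dker_two_pow_sub {n j : ℕ} (hj : j ≤ 2 ^ n) (x : G) :
    Dker (2 ^ n - j) x = Dker (2 ^ n) x - walsh (2 ^ n - 1) x * Dker j x := by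
  have hsplit :
      Dker (2 ^ n) x = Dker (2 ^ n - j) x + ∑ i ∈ range j, walsh (2 ^ n - 1 - i) x := by
    conv_lhs => rw [Dker, ← Nat.sub_add_cancel hj, sum_range_add]
    rw [Dker, ← sum_range_reflect _ j]
    congr 1
    refine sum_congr rfl fun i hi => ?_
    have := mem_range.1 hi
    congr 1
    omega
  have hreflect : ∑ i ∈ range j, walsh (2 ^ n - 1 - i) x = walsh (2 ^ n - 1) x * Dker j x := by
    rw [Dker, mul_sum]
    exact sum_congr rfl fun i hi => walsh_two_pow_sub_one_sub ((mem_range.1 hi).trans_le hj) x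
  rw [hsplit, hreflect, add_sub_cancel_right]

theorem sum_range_succ_Dker (k : ℕ) (x : G) :
    ∑ i ∈ range (k + 1), Dker i x = k * Fker k x := by
  rw [sum_range_eq_sum_Icc_one_of_map_zero (f := fun i => Dker i x) (by simp [Dker]),
    Nat.add_sub_cancel, Fker]
  rcases k.eq_zero_or_pos with rfl | hk
  · simp
  · field_simp

theorem deltaT_of_lt (t : ℕ → ℕ → ℝ) {k n : ℕ} (h : k < n) :
    deltaT t k n = t k n - t (k + 1) n := by
  rw [deltaT, if_pos (show k + 1 ≤ n from h)]

theorem sum_range_mul_Dker_by_parts (a : ℕ → ℝ) (M : ℕ) (x : G) :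
    ∑ j ∈ range (M + 1), a j * Dker j x
      = a M * (M * Fker M x) - ∑ k ∈ Icc 1 (M - 1), (a (k + 1) - a k) * (k * Fker k x) := by
  have := sum_range_by_parts a (fun j => Dker j x) (M + 1)
  simp only [smul_eq_mul, sum_range_succ_Dker, Nat.add_sub_cancel] at this
  rw [this, sum_range_eq_sum_Icc_one_of_map_zero (by simp)]

theorem KT_two_pow (t : ℕ → ℕ → ℝ) (n : ℕ) (x : G) :
    KT t (2 ^ n) x = Dker (2 ^ n) x * ∑ k ∈ Icc 1 (2 ^ n), t k (2 ^ n)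
      - walsh (2 ^ n - 1) x * ∑ j ∈ range (2 ^ n), t (2 ^ n - j) (2 ^ n) * Dker j x := by
  rw [KT, sum_Icc_one_eq_sum_range_sub, sum_Icc_one_eq_sum_range_sub, mul_sum, mul_sum,
    ← sum_sub_distrib]
  refine sum_congr rfl fun j hj => ?_
  rw [Dker_two_pow_sub (mem_range.1 hj).le]
  ring

theorem statement9 (n : ℕ) (t : ℕ → ℕ → ℝ) (x : G) :
    KT t (2 ^ n) x =
      Dker (2 ^ n) x * (∑ k ∈ Finset.Icc 1 (2 ^ n), t k (2 ^ n))
      - walsh (2 ^ n - 1) x * t 1 (2 ^ n) * ((2 : ℝ) ^ n - 1) * Fker (2 ^ n - 1) x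
      + walsh (2 ^ n - 1) x *
          (∑ k ∈ Finset.Icc 1 (2 ^ n - 2), deltaT t (2 ^ n - k - 1) (2 ^ n) * k * Fker k x) := by
  obtain ⟨M, hM⟩ : ∃ M, 2 ^ n = M + 1 := ⟨2 ^ n - 1, by have := n.one_le_two_pow; omega⟩
  have hMcast : (2 : ℝ) ^ n - 1 = M := by
    rw [sub_eq_iff_eq_add]
    exact_mod_cast hM
  rw [KT_two_pow, hM, sum_range_mul_Dker_by_parts, hMcast, Nat.add_sub_cancel,
    Nat.add_sub_cancel_left]
  have hdelta : ∀ k ∈ Icc 1 (M - 1),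
      (t (M + 1 - (k + 1)) (M + 1) - t (M + 1 - k) (M + 1)) * (k * Fker k x)
        = deltaT t (M + 1 - k - 1) (M + 1) * k * Fker k x := by
    intro k hk
    obtain ⟨-, hkM⟩ := mem_Icc.1 hk
    rw [deltaT_of_lt t (by omega), show M + 1 - k - 1 + 1 = M + 1 - k by omega, Nat.sub_sub]
    ring
  rw [show M + 1 - 2 = M - 1 by omega, sum_congr rfl hdelta]
  ring
end
end
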